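/- arXiv:1909.01820 — 2 statements merged into one kernel-verified Lean document; each statement's English description precedes it below -/
import Mathlib

section
/- Let w > 0 and ξ > 0, and let ψ₁ = r₁ e^{iφ₁} and ψ₂ = r₂ e^{iφ₂} be complex numbers with r₁, r₂ ≥ 0 and φ₁, φ₂ ∈ ℝ. Define A = (e^{w/(2ξ)} ψ₁ − e^{−w/(2ξ)} ψ₂)/(2 sinh(w/ξ)) and B = (e^{w/(2ξ)} ψ₂ − e^{−w/(2ξ)} ψ₁)/(2 sinh(w/ξ)). Then the Josephson current j = (2i/ξ)(conj(B)·A − conj(A)·B) satisfies j = i(conj(ψ₂)ψ₁ − conj(ψ₁)ψ₂)/(ξ sinh(w/ξ)) = (2 r₁ r₂ /(ξ sinh(w/ξ))) · sin(φ₂ − φ₁). In particular j is real and proportional to the sine of the phase difference of the two order parameters. -/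
/-!
Write `a = e^{w/(2ξ)}`, `b = e^{-w/(2ξ)}` and `s = sinh (w/ξ)`, so that `a² - b² = 2s`. Since `a`
and `b` are real, the bilinear form `conj B * A - conj A * B` of the two boundary-value
coefficients expands to `(a² - b²)/(2s)²` times the Wronskian-like form
`conj ψ₂ * ψ₁ - conj ψ₁ * ψ₂ = 2i Im (conj ψ₂ * ψ₁)`, and in polar form
`Im (conj ψ₂ * ψ₁) = r₁ r₂ sin (φ₁ - φ₂)`.
-/

open Complex ComplexConjugate

theorem Real.sq_exp_sub_sq_exp_neg (t : ℝ) :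
    Real.exp t ^ 2 - Real.exp (-t) ^ 2 = 2 * Real.sinh (2 * t) := by
  rw [Real.sinh_eq, ← Real.exp_nat_mul, ← Real.exp_nat_mul]
  push_cast
  ring_nf

theorem Complex.I_mul_sub_conj (u : ℂ) : I * (u - conj u) = -2 * u.im := by
  rw [sub_conj]
  push_cast
  ring_nf
  rw [I_sq]
  ring

theorem Complex.im_conj_mul_polar (r₁ r₂ φ₁ φ₂ : ℝ) :
    (conj (r₂ * exp (I * φ₂)) * (r₁ * exp (I * φ₁))).im = r₁ * r₂ * Real.sin (φ₁ - φ₂) := by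
  have polar : conj (r₂ * exp (I * φ₂)) * (r₁ * exp (I * φ₁))
      = (r₁ * r₂ : ℝ) * exp ((φ₁ - φ₂ : ℝ) * I) := by
    rw [map_mul, conj_ofReal, ← exp_conj, map_mul, conj_I, conj_ofReal, mul_mul_mul_comm,
      ← exp_add]
    push_cast
    ring_nf
  rw [polar, im_ofReal_mul, exp_ofReal_mul_I_im]

/-- The identity survives `s = 0`, where both sides are `0` by the convention `x / 0 = 0`. -/
theorem conj_mul_sub_conj_mul_of_sq_sub_sq {a b s : ℝ} (h : a ^ 2 - b ^ 2 = 2 * s)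
    (ψ₁ ψ₂ : ℂ) :
    conj ((a * ψ₂ - b * ψ₁) / (2 * s : ℝ)) * ((a * ψ₁ - b * ψ₂) / (2 * s : ℝ))
      - conj ((a * ψ₁ - b * ψ₂) / (2 * s : ℝ)) * ((a * ψ₂ - b * ψ₁) / (2 * s : ℝ))
      = (conj ψ₂ * ψ₁ - conj ψ₁ * ψ₂) / (2 * s : ℝ) := by
  rcases eq_or_ne s 0 with rfl | hs
  · simp
  have hs' : (s : ℂ) ≠ 0 := ofReal_ne_zero.mpr hs
  have h' : (a : ℂ) ^ 2 - b ^ 2 = 2 * s := by exact_mod_cast h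
  simp only [map_div₀, map_sub, map_mul, conj_ofReal]
  push_cast
  field_simp
  linear_combination (conj ψ₂ * ψ₁ - conj ψ₁ * ψ₂) * h'

theorem josephson_current_general (w ξ : ℝ)
    (r₁ r₂ φ₁ φ₂ : ℝ) :
    let ψ₁ : ℂ := (r₁ : ℂ) * Complex.exp (Complex.I * (φ₁ : ℂ))
    let ψ₂ : ℂ := (r₂ : ℂ) * Complex.exp (Complex.I * (φ₂ : ℂ))
    let A : ℂ := (Complex.exp ((w / (2 * ξ) : ℝ) : ℂ) * ψ₁
        - Complex.exp ((-(w / (2 * ξ)) : ℝ) : ℂ) * ψ₂) / ((2 * Real.sinh (w / ξ) : ℝ) : ℂ)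
    let B : ℂ := (Complex.exp ((w / (2 * ξ) : ℝ) : ℂ) * ψ₂
        - Complex.exp ((-(w / (2 * ξ)) : ℝ) : ℂ) * ψ₁) / ((2 * Real.sinh (w / ξ) : ℝ) : ℂ)
    let j : ℂ := (2 * Complex.I / (ξ : ℂ)) * (starRingEnd ℂ B * A - starRingEnd ℂ A * B)
    j = Complex.I * (starRingEnd ℂ ψ₂ * ψ₁ - starRingEnd ℂ ψ₁ * ψ₂)
        / ((ξ * Real.sinh (w / ξ) : ℝ) : ℂ) ∧
    j = (((2 * r₁ * r₂ / (ξ * Real.sinh (w / ξ))) * Real.sin (φ₂ - φ₁) : ℝ) : ℂ) ∧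
    j.im = 0 := by
  intro ψ₁ ψ₂ A B j
  have hab : Real.exp (w / (2 * ξ)) ^ 2 - Real.exp (-(w / (2 * ξ))) ^ 2
      = 2 * Real.sinh (w / ξ) := by
    rw [Real.sq_exp_sub_sq_exp_neg]
    ring_nf
  have hj : j = I * (conj ψ₂ * ψ₁ - conj ψ₁ * ψ₂) / ((ξ * Real.sinh (w / ξ) : ℝ) : ℂ) := by
    simp only [j, A, B, ← ofReal_exp, conj_mul_sub_conj_mul_of_sq_sub_sq hab]
    push_cast
    ring
  have hW : I * (conj ψ₂ * ψ₁ - conj ψ₁ * ψ₂) = ((2 * r₁ * r₂ * Real.sin (φ₂ - φ₁) : ℝ) : ℂ) := by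
    rw [show conj ψ₁ * ψ₂ = conj (conj ψ₂ * ψ₁) by simp [mul_comm], I_mul_sub_conj,
      im_conj_mul_polar, ← neg_sub φ₂ φ₁, Real.sin_neg]
    push_cast
    ring
  have hj' : j = (((2 * r₁ * r₂ / (ξ * Real.sinh (w / ξ))) * Real.sin (φ₂ - φ₁) : ℝ) : ℂ) := by
    rw [hj, hW]
    push_cast
    ring
  exact ⟨hj, hj', by rw [hj', ofReal_im]⟩

/-- DC Josephson effect: for order parameters `ψ₁ = r₁ e^{iφ₁}` and `ψ₂ = r₂ e^{iφ₂}` on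
either side of a junction of width `w` with decay length `ξ`, the supercurrent
`j = (2i/ξ)(B* A − A* B)` carried by the field `ψ(x) = A e^{−x/ξ} + B e^{x/ξ}` equals
`i(ψ₂* ψ₁ − ψ₁* ψ₂)/(ξ sinh(w/ξ)) = (2 r₁ r₂/(ξ sinh(w/ξ))) sin(φ₂ − φ₁)`;
in particular `j` is real and proportional to the sine of the phase difference. -/
theorem josephson_current (w ξ : ℝ) (hw : 0 < w) (hξ : 0 < ξ)
    (r₁ r₂ φ₁ φ₂ : ℝ) (hr₁ : 0 ≤ r₁) (hr₂ : 0 ≤ r₂) :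
    let ψ₁ : ℂ := (r₁ : ℂ) * Complex.exp (Complex.I * (φ₁ : ℂ))
    let ψ₂ : ℂ := (r₂ : ℂ) * Complex.exp (Complex.I * (φ₂ : ℂ))
    let A : ℂ := (Complex.exp ((w / (2 * ξ) : ℝ) : ℂ) * ψ₁
        - Complex.exp ((-(w / (2 * ξ)) : ℝ) : ℂ) * ψ₂) / ((2 * Real.sinh (w / ξ) : ℝ) : ℂ)
    let B : ℂ := (Complex.exp ((w / (2 * ξ) : ℝ) : ℂ) * ψ₂
        - Complex.exp ((-(w / (2 * ξ)) : ℝ) : ℂ) * ψ₁) / ((2 * Real.sinh (w / ξ) : ℝ) : ℂ)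
    let j : ℂ := (2 * Complex.I / (ξ : ℂ)) * (starRingEnd ℂ B * A - starRingEnd ℂ A * B)
    j = Complex.I * (starRingEnd ℂ ψ₂ * ψ₁ - starRingEnd ℂ ψ₁ * ψ₂)
        / ((ξ * Real.sinh (w / ξ) : ℝ) : ℂ) ∧
    j = (((2 * r₁ * r₂ / (ξ * Real.sinh (w / ξ))) * Real.sin (φ₂ - φ₁) : ℝ) : ℂ) ∧
    j.im = 0 :=
  josephson_current_general w ξ r₁ r₂ φ₁ φ₂
end

section
/- Let ξ > 0 and define f : ℝ³ ∖ {0} → ℝ by f(x) = exp(−‖x‖/ξ)/‖x‖. Then at every x ≠ 0 the Laplacian of f satisfies Σ_{n=1}^{3} ∂²f/∂x_n²(x) = f(x)/ξ². Equivalently, for r > 0 and c ≠ 0 with ξ = √(c²/r), the response profile δo(x) = (μ₀/(4πc²)) e^{−‖x‖/ξ}/‖x‖ satisfies the linearized Ginzburg–Landau equation −c² Δ(δo)(x) + r · δo(x) = 0 for all x ≠ 0. -/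
/-!
For a radial function `φ(‖x‖)` on `ℝᵈ` the Laplacian at `x ≠ 0` is `φ''(t) + (d - 1) φ'(t) / t`
with `t = ‖x‖`. In dimension three the substitution `φ = u / t` reduces it to `u''(t) / t`, and
`u(t) = e^{-t/ξ}` satisfies `u'' = u / ξ²`. The Ginzburg–Landau equation is then the case
`ξ² = c² / r`, the Laplacian being linear in the profile.
-/

open Filter Topology

section Radial

variable {F : Type*} [NormedAddCommGroup F] [InnerProductSpace ℝ F]

theorem hasFDerivAt_norm_of_ne_zero {x : F} (hx : x ≠ 0) :
    HasFDerivAt (fun y : F => ‖y‖) (‖x‖⁻¹ • innerSL ℝ x) x := by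
  have hsq := (Real.hasDerivAt_sqrt (pow_ne_zero 2 (norm_ne_zero_iff.2 hx))).comp_hasFDerivAt x
    (hasStrictFDerivAt_norm_sq x).hasFDerivAt
  simp only [Function.comp_def, Real.sqrt_sq (norm_nonneg _)] at hsq
  refine hsq.congr_fderiv ?_
  ext v
  simp only [one_div, mul_inv_rev, smul_apply, coe_innerSL_apply,
    nsmul_eq_mul, Nat.cast_ofNat, smul_eq_mul]
  ring

theorem HasDerivAt.hasFDerivAt_comp_norm {φ : ℝ → ℝ} {φ' : ℝ} {x : F} (hx : x ≠ 0)
    (hφ : HasDerivAt φ φ' ‖x‖) :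
    HasFDerivAt (fun y => φ ‖y‖) ((φ' / ‖x‖) • innerSL ℝ x) x :=
  (hφ.comp_hasFDerivAt x (hasFDerivAt_norm_of_ne_zero hx)).congr_fderiv <| by
    rw [smul_smul, div_eq_mul_inv]

end Radial

section Euclidean

variable {ι : Type*} [Fintype ι] [DecidableEq ι]

theorem fderiv_comp_norm_single {φ : ℝ → ℝ} {φ' : ℝ} {x : EuclideanSpace ℝ ι} (hx : x ≠ 0)
    (hφ : HasDerivAt φ φ' ‖x‖) (n : ι) :
    fderiv ℝ (fun y => φ ‖y‖) x (EuclideanSpace.single n 1) = φ' / ‖x‖ * x n := by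
  simp [(hφ.hasFDerivAt_comp_norm hx).fderiv, EuclideanSpace.inner_single_right]

theorem fderiv_fderiv_comp_norm_single {φ φ' : ℝ → ℝ} {φ'' : ℝ} {x : EuclideanSpace ℝ ι}
    (hx : x ≠ 0) (hφ : ∀ᶠ t in 𝓝 ‖x‖, HasDerivAt φ (φ' t) t) (hφ' : HasDerivAt φ' φ'' ‖x‖)
    (n : ι) :
    fderiv ℝ (fun y => fderiv ℝ (fun z => φ ‖z‖) y (EuclideanSpace.single n 1)) x
        (EuclideanSpace.single n 1)
      = φ' ‖x‖ / ‖x‖ + (φ'' * ‖x‖ - φ' ‖x‖) / ‖x‖ ^ 3 * x n ^ 2 := by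
  have hnorm : ‖x‖ ≠ 0 := norm_ne_zero_iff.2 hx
  have hpartial : (fun y => fderiv ℝ (fun z => φ ‖z‖) y (EuclideanSpace.single n 1))
      =ᶠ[𝓝 x] fun y => φ' ‖y‖ / ‖y‖ * y n := by
    filter_upwards [continuous_norm.continuousAt.eventually hφ, compl_singleton_mem_nhds hx]
      with y hy hy0
    exact fderiv_comp_norm_single hy0 hy n
  have hψ : HasDerivAt (fun t => φ' t / t) ((φ'' * ‖x‖ - φ' ‖x‖) / ‖x‖ ^ 2) ‖x‖ :=
    (hφ'.div (hasDerivAt_id' ‖x‖) hnorm).congr_deriv (by ring)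
  have hD : HasFDerivAt (fun y : EuclideanSpace ℝ ι => φ' ‖y‖ / ‖y‖ * y n) _ x :=
    (hψ.hasFDerivAt_comp_norm hx).mul (EuclideanSpace.proj n : _ →L[ℝ] ℝ).hasFDerivAt
  rw [hpartial.fderiv_eq, hD.fderiv]
  simp only [add_apply, smul_apply, PiLp.proj_apply,
    PiLp.single_eq_same, smul_eq_mul, mul_one, coe_innerSL_apply,
    EuclideanSpace.inner_single_right, Real.ringHom_apply, one_mul]
  field_simp

theorem sum_fderiv_fderiv_comp_norm_single {φ φ' : ℝ → ℝ} {φ'' : ℝ} {x : EuclideanSpace ℝ ι}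
    (hx : x ≠ 0) (hφ : ∀ᶠ t in 𝓝 ‖x‖, HasDerivAt φ (φ' t) t) (hφ' : HasDerivAt φ' φ'' ‖x‖) :
    ∑ n, fderiv ℝ (fun y => fderiv ℝ (fun z => φ ‖z‖) y (EuclideanSpace.single n 1)) x
        (EuclideanSpace.single n 1)
      = φ'' + (Fintype.card ι - 1) * φ' ‖x‖ / ‖x‖ := by
  have hnorm : ‖x‖ ≠ 0 := norm_ne_zero_iff.2 hx
  simp_rw [fderiv_fderiv_comp_norm_single hx hφ hφ', Finset.sum_add_distrib, ← Finset.mul_sum,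
    ← EuclideanSpace.real_norm_sq_eq, Finset.sum_const, Finset.card_univ, nsmul_eq_mul]
  field_simp
  ring

end Euclidean

theorem sum_fderiv_fderiv_div_norm_single {u u' : ℝ → ℝ} {u'' : ℝ}
    {x : EuclideanSpace ℝ (Fin 3)} (hx : x ≠ 0) (hu : ∀ᶠ t in 𝓝 ‖x‖, HasDerivAt u (u' t) t)
    (hu' : HasDerivAt u' u'' ‖x‖) :
    ∑ n, fderiv ℝ (fun y => fderiv ℝ (fun z => u ‖z‖ / ‖z‖) y (EuclideanSpace.single n 1)) x
        (EuclideanSpace.single n 1)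
      = u'' / ‖x‖ := by
  have hnorm : ‖x‖ ≠ 0 := norm_ne_zero_iff.2 hx
  have hφ : ∀ᶠ t in 𝓝 ‖x‖, HasDerivAt (fun s => u s / s) ((u' t * t - u t) / t ^ 2) t := by
    filter_upwards [hu, eventually_ne_nhds hnorm] with t ht ht0
    exact (ht.div (hasDerivAt_id' t) ht0).congr_deriv (by ring)
  have hφ' := ((hu'.mul (hasDerivAt_id' ‖x‖)).sub hu.self_of_nhds).div
    (hasDerivAt_pow 2 ‖x‖) (pow_ne_zero 2 hnorm)
  rw [sum_fderiv_fderiv_comp_norm_single hx hφ hφ']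
  simp only [Fintype.card_fin, Pi.sub_apply, Pi.mul_apply]
  field_simp
  ring

theorem sum_fderiv_fderiv_exp_div_norm_single (ξ : ℝ) {x : EuclideanSpace ℝ (Fin 3)}
    (hx : x ≠ 0) :
    ∑ n, fderiv ℝ (fun y => fderiv ℝ (fun z : EuclideanSpace ℝ (Fin 3) =>
        Real.exp (-‖z‖ / ξ) / ‖z‖) y (EuclideanSpace.single n 1)) x (EuclideanSpace.single n 1)
      = Real.exp (-‖x‖ / ξ) / ‖x‖ / ξ ^ 2 := by
  have hu (t : ℝ) : HasDerivAt (fun s => Real.exp (-s / ξ)) (Real.exp (-t / ξ) * (-1 / ξ)) t :=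
    ((hasDerivAt_id' t).neg.div_const ξ).exp
  rw [sum_fderiv_fderiv_div_norm_single hx (.of_forall hu) ((hu ‖x‖).mul_const (-1 / ξ))]
  ring

theorem fderiv_fderiv_const_mul_apply {𝕜 E : Type*} [NontriviallyNormedField 𝕜]
    [NormedAddCommGroup E] [NormedSpace 𝕜 E] (k : 𝕜) (f : E → 𝕜) (x v w : E) :
    fderiv 𝕜 (fun y => fderiv 𝕜 (fun z => k * f z) y v) x w
      = k * fderiv 𝕜 (fun y => fderiv 𝕜 f y v) x w := by
  have hpartial : (fun y => fderiv 𝕜 (fun z => k * f z) y v) = k • fun y => fderiv 𝕜 f y v := by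
    ext y
    exact congrFun (congrArg DFunLike.coe (congrFun (fderiv_const_smul_field (f := f) k) y)) v
  rw [hpartial, fderiv_const_smul_field]
  rfl

theorem yukawa_profile_solves_linearized_GL_general (ξ : ℝ) :
    (∀ x : EuclideanSpace ℝ (Fin 3), x ≠ 0 →
      ∑ n : Fin 3,
        fderiv ℝ
          (fun y => fderiv ℝ (fun z : EuclideanSpace ℝ (Fin 3) =>
              Real.exp (-‖z‖ / ξ) / ‖z‖) y (EuclideanSpace.single n 1))
          x (EuclideanSpace.single n 1)
        = (Real.exp (-‖x‖ / ξ) / ‖x‖) / ξ ^ 2) ∧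
    (∀ r c μ₀ : ℝ, 0 < r → c ≠ 0 → ξ = Real.sqrt (c ^ 2 / r) →
      ∀ x : EuclideanSpace ℝ (Fin 3), x ≠ 0 →
        -c ^ 2 *
            (∑ n : Fin 3,
              fderiv ℝ
                (fun y => fderiv ℝ (fun z : EuclideanSpace ℝ (Fin 3) =>
                    (μ₀ / (4 * Real.pi * c ^ 2)) * (Real.exp (-‖z‖ / ξ) / ‖z‖)) y
                  (EuclideanSpace.single n 1))
                x (EuclideanSpace.single n 1))
          + r * ((μ₀ / (4 * Real.pi * c ^ 2)) * (Real.exp (-‖x‖ / ξ) / ‖x‖)) = 0) := by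
  refine ⟨fun x hx => sum_fderiv_fderiv_exp_div_norm_single ξ hx,
    fun r c μ₀ hr hc hξ x hx => ?_⟩
  have hξsq : ξ ^ 2 = c ^ 2 / r := by rw [hξ, Real.sq_sqrt (by positivity)]
  simp_rw [fderiv_fderiv_const_mul_apply, ← Finset.mul_sum,
    sum_fderiv_fderiv_exp_div_norm_single ξ hx, hξsq]
  field_simp
  ring

/-- The screened-Coulomb (Yukawa) profile `f(x) = e^{−‖x‖/ξ}/‖x‖` on `ℝ³ ∖ {0}`
satisfies `Δf = f/ξ²`; equivalently, the Ginzburg–Landau response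
`δo(x) = (μ₀/(4πc²)) e^{−‖x‖/ξ}/‖x‖` with coherence length `ξ = √(c²/r)` satisfies the
linearized equation `−c² Δ(δo) + r δo = 0` away from the origin. -/
theorem yukawa_profile_solves_linearized_GL (ξ : ℝ) (hξ : 0 < ξ) :
    (∀ x : EuclideanSpace ℝ (Fin 3), x ≠ 0 →
      ∑ n : Fin 3,
        fderiv ℝ
          (fun y => fderiv ℝ (fun z : EuclideanSpace ℝ (Fin 3) =>
              Real.exp (-‖z‖ / ξ) / ‖z‖) y (EuclideanSpace.single n 1))
          x (EuclideanSpace.single n 1)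
        = (Real.exp (-‖x‖ / ξ) / ‖x‖) / ξ ^ 2) ∧
    (∀ r c μ₀ : ℝ, 0 < r → c ≠ 0 → ξ = Real.sqrt (c ^ 2 / r) →
      ∀ x : EuclideanSpace ℝ (Fin 3), x ≠ 0 →
        -c ^ 2 *
            (∑ n : Fin 3,
              fderiv ℝ
                (fun y => fderiv ℝ (fun z : EuclideanSpace ℝ (Fin 3) =>
                    (μ₀ / (4 * Real.pi * c ^ 2)) * (Real.exp (-‖z‖ / ξ) / ‖z‖)) y
                  (EuclideanSpace.single n 1))
                x (EuclideanSpace.single n 1))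
          + r * ((μ₀ / (4 * Real.pi * c ^ 2)) * (Real.exp (-‖x‖ / ξ) / ‖x‖)) = 0) :=
  yukawa_profile_solves_linearized_GL_general ξ
end
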